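/- arXiv:1804.06200 — 2 statements merged into one kernel-verified Lean document; each statement's English description precedes it below -/
import Mathlib

section
/- For all natural numbers n, the sum over j from 0 to n of the Stirling number of the second kind S(n,j) times j! times the j-th Gregory coefficient G_j equals 1/(n+1). -/
open Polynomial Finset

/-- Forward difference operator on functions ℝ → ℝ. -/
noncomputable def fdiff (f : ℝ → ℝ) : ℝ → ℝ := fun x => f (x + 1) - f x

/-- Forward difference operator on real polynomials: (Δπ)(x) = π(x+1) - π(x). -/
noncomputable def polyDelta (p : Polynomial ℝ) : Polynomial ℝ := p.comp (X + 1) - p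

/-- Unsigned Stirling numbers of the first kind. -/
def stirling1 : ℕ → ℕ → ℕ
  | 0, 0 => 1
  | 0, _ + 1 => 0
  | _ + 1, 0 => 0
  | n + 1, m + 1 => n * stirling1 n (m + 1) + stirling1 n m

/-- Stirling numbers of the second kind, via the explicit formula. -/
noncomputable def stirling2 (n m : ℕ) : ℝ :=
  (1 / (m.factorial : ℝ)) *
    ∑ j ∈ Finset.range (m + 1), (m.choose j : ℝ) * (-1) ^ (m - j) * (j : ℝ) ^ n

/-- Gregory coefficients. -/
noncomputable def gregory (n : ℕ) : ℝ :=
  (1 / (n.factorial : ℝ)) *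
    ∑ j ∈ Finset.range (n + 1), (stirling1 n j : ℝ) * (-1) ^ (n - j) / ((j : ℝ) + 1)

lemma stirling1_succ_zero (n : ℕ) : stirling1 (n+1) 0 = 0 := rfl
lemma stirling1_rec (n m : ℕ) : stirling1 (n+1) (m+1) = n * stirling1 n (m+1) + stirling1 n m := rfl

lemma stirling1_eq_zero : ∀ n k : ℕ, n < k → stirling1 n k = 0 := by
  intro n
  induction n with
  | zero => intro k hk; match k, hk with
    | k+1, _ => rfl
  | succ n ih =>
    intro k hk
    match k, hk with
    | k+1, hk =>
      rw [stirling1_rec, ih (k+1) (by omega), ih k (by omega)]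
      simp

lemma rising (j : ℕ) (y : ℝ) :
    ∏ k ∈ range j, (y + k) = ∑ i ∈ range (j+1), (stirling1 j i : ℝ) * y^i := by
  induction j with
  | zero => simp [stirling1]
  | succ j ih =>
    rw [prod_range_succ, ih]
    rw [sum_range_succ' (fun i => (stirling1 (j+1) i : ℝ) * y^i) (j+1)]
    rw [stirling1_succ_zero]
    push_cast
    rw [zero_mul, add_zero]
    have key : ∑ i ∈ range (j+1), (j:ℝ) * stirling1 j i * y^i
        = ∑ m ∈ range (j+1), (j:ℝ) * stirling1 j (m+1) * y^(m+1) := by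
      rw [sum_range_succ' (fun i => (j:ℝ) * stirling1 j i * y^i) j]
      rw [sum_range_succ (fun m => (j:ℝ) * stirling1 j (m+1) * y^(m+1)) j]
      rw [stirling1_eq_zero j (j+1) (by omega)]
      have : (j:ℝ) * (stirling1 j 0 : ℝ) = 0 := by
        cases j with
        | zero => simp
        | succ k => rw [stirling1_succ_zero]; simp
      push_cast
      rw [this]
      simp
    calc (∑ i ∈ range (j+1), (stirling1 j i : ℝ) * y^i) * (y + j)
        = (∑ i ∈ range (j+1), (stirling1 j i : ℝ) * y^(i+1))
          + ∑ i ∈ range (j+1), (j:ℝ) * stirling1 j i * y^i := by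
          rw [sum_mul, ← sum_add_distrib]; apply sum_congr rfl; intro i _; ring
      _ = (∑ i ∈ range (j+1), (stirling1 j i : ℝ) * y^(i+1))
          + ∑ m ∈ range (j+1), (j:ℝ) * stirling1 j (m+1) * y^(m+1) := by rw [key]
      _ = ∑ m ∈ range (j+1), (stirling1 (j+1) (m+1) : ℝ) * y^(m+1) := by
          rw [← sum_add_distrib]; apply sum_congr rfl; intro m _
          rw [stirling1_rec]; push_cast; ring


lemma neg_one_pow_sub {i j : ℕ} (h : i ≤ j) : ((-1:ℝ))^(j - i) = (-1)^j * (-1)^i := by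
  have h1 : ((-1:ℝ))^(j-i) * (-1)^i = (-1)^j := by rw [← pow_add, Nat.sub_add_cancel h]
  have h2 : ((-1:ℝ))^i * (-1)^i = 1 := by rw [← mul_pow]; norm_num
  calc ((-1:ℝ))^(j-i) = (-1)^(j-i) * ((-1)^i * (-1)^i) := by rw [h2, mul_one]
    _ = (-1)^j * (-1)^i := by rw [← mul_assoc, h1]

noncomputable def fall (x : ℝ) (j : ℕ) : ℝ := ∏ k ∈ range j, (x - k)

lemma fall_eq (j : ℕ) (x : ℝ) :
    fall x j = ∑ i ∈ range (j+1), (stirling1 j i : ℝ) * (-1)^(j-i) * x^i := by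
  have h : fall x j = (-1)^j * ∏ k ∈ range j, (-x + k) := by
    rw [fall]
    rw [show ((-1:ℝ))^j = ∏ _k ∈ range j, (-1:ℝ) by rw [prod_const]; simp]
    rw [← prod_mul_distrib]
    apply prod_congr rfl; intro k _; ring
  rw [h, rising j (-x), mul_sum]
  apply sum_congr rfl; intro i hi
  rw [mem_range] at hi
  rw [neg_one_pow_sub (by omega : i ≤ j), neg_pow]
  ring

lemma fall_continuous (j : ℕ) : Continuous fun x : ℝ => fall x j := by
  unfold fall; exact continuous_finset_prod _ (fun k _ => continuous_id.sub continuous_const)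

lemma gregory_eq (j : ℕ) :
    (j.factorial : ℝ) * gregory j = ∫ x in (0:ℝ)..1, fall x j := by
  have hint : ∀ i ∈ range (j+1), IntervalIntegrable
      (fun x : ℝ => (stirling1 j i : ℝ) * (-1)^(j-i) * x^i) MeasureTheory.volume 0 1 := by
    intro i _; exact (Continuous.intervalIntegrable (by continuity) 0 1)
  have : (∫ x in (0:ℝ)..1, fall x j)
      = ∑ i ∈ range (j+1), (stirling1 j i : ℝ) * (-1)^(j-i) / ((i:ℝ)+1) := by
    rw [intervalIntegral.integral_congr (g := fun x => ∑ i ∈ range (j+1),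
        (stirling1 j i : ℝ) * (-1)^(j-i) * x^i) (fun x _ => fall_eq j x)]
    rw [intervalIntegral.integral_finset_sum hint]
    apply sum_congr rfl; intro i _
    rw [intervalIntegral.integral_const_mul, integral_pow]
    push_cast; ring
  rw [this, gregory, ← mul_assoc]
  rw [mul_one_div, div_self (by exact_mod_cast j.factorial_ne_zero), one_mul]

noncomputable def U (n m : ℕ) : ℝ :=
  ∑ j ∈ range (m+1), (m.choose j : ℝ) * (-1)^j * (j:ℝ)^n

lemma stirling2_eq_U (n m : ℕ) : stirling2 n m = (-1)^m / (m.factorial : ℝ) * U n m := by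
  rw [stirling2, U, mul_sum, mul_sum]
  apply sum_congr rfl; intro j hj
  rw [mem_range] at hj
  rw [neg_one_pow_sub (by omega : j ≤ m)]
  ring

lemma U_rec (n m : ℕ) : U (n+1) (m+1) = ((m:ℝ)+1) * (U n (m+1) - U n m) := by
  set V : ℝ := ∑ k ∈ range (m+1), (m.choose k : ℝ) * (-1)^k * ((k:ℝ)+1)^n with hV
  have hL : U (n+1) (m+1) = -(((m:ℝ)+1) * V) := by
    rw [U, sum_range_succ' (fun j => ((m+1).choose j : ℝ) * (-1)^j * (j:ℝ)^(n+1)) (m+1)]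
    have h0 : ((m+1).choose 0 : ℝ) * (-1)^0 * ((0:ℕ):ℝ)^(n+1) = 0 := by simp
    rw [h0, add_zero, hV, mul_sum, ← Finset.sum_neg_distrib]
    apply sum_congr rfl; intro k hk
    have hc : ((m+1).choose (k+1) : ℝ) * ((k:ℝ)+1) = ((m:ℝ)+1) * (m.choose k : ℝ) := by
      have h := Nat.add_one_mul_choose_eq m k
      have h' : (((m+1) * m.choose k : ℕ) : ℝ) = (((m+1).choose (k+1) * (k+1) : ℕ) : ℝ) := by
        exact_mod_cast h
      push_cast at h'
      linarith [h']
    push_cast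
    linear_combination ((-1:ℝ))^(k+1) * ((k:ℝ)+1)^n * hc
  have hR : U n (m+1) - U n m = -V := by
    have h1 : U n (m+1) = (∑ k ∈ range (m+1),
        ((m.choose k : ℝ) + (m.choose (k+1) : ℝ)) * (-1)^(k+1) * ((k:ℝ)+1)^n) + ((0:ℝ))^n := by
      rw [U, sum_range_succ' (fun j => ((m+1).choose j : ℝ) * (-1)^j * (j:ℝ)^n) (m+1)]
      congr 1
      · apply sum_congr rfl; intro k _
        rw [Nat.choose_succ_succ]
        push_cast; ring
      · simp
    have h2 : U n m = (∑ k ∈ range (m+1),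
        (m.choose (k+1) : ℝ) * (-1)^(k+1) * ((k:ℝ)+1)^n) + ((0:ℝ))^n := by
      have hext : U n m = ∑ j ∈ range (m+2), (m.choose j : ℝ) * (-1)^j * (j:ℝ)^n := by
        rw [U, sum_range_succ (fun j => (m.choose j : ℝ) * (-1)^j * (j:ℝ)^n) (m+1)]
        rw [Nat.choose_succ_self]
        simp
      rw [hext, sum_range_succ' (fun j => (m.choose j : ℝ) * (-1)^j * (j:ℝ)^n) (m+1)]
      congr 1
      · apply sum_congr rfl; intro k _; push_cast; ring
      · simp
    rw [h1, h2, hV]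
    rw [add_sub_add_right_eq_sub, ← sum_sub_distrib, ← Finset.sum_neg_distrib]
    apply sum_congr rfl; intro k _
    ring
  rw [hL, hR]; ring

lemma stirling2_zero_left (m : ℕ) : stirling2 0 m = if m = 0 then 1 else 0 := by
  have halt : (∑ j ∈ range (m+1), (m.choose j : ℝ) * (-1)^j * (j:ℝ)^0)
      = if m = 0 then 1 else 0 := by
    have := Int.alternating_sum_range_choose (n := m)
    have h2 : ((∑ i ∈ range (m+1), (-1:ℤ)^i * m.choose i : ℤ) : ℝ)
        = ((if m = 0 then 1 else 0 : ℤ) : ℝ) := by exact_mod_cast this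
    push_cast at h2
    rw [← h2]
    apply sum_congr rfl; intro j _; ring
  rw [stirling2_eq_U, U, halt]
  rcases Nat.eq_zero_or_pos m with h | h
  · subst h; simp
  · have h' : ¬ m = 0 := by omega
    rw [if_neg h']
    simp

lemma stirling2_rec (n m : ℕ) :
    stirling2 (n+1) (m+1) = ((m:ℝ)+1) * stirling2 n (m+1) + stirling2 n m := by
  rw [stirling2_eq_U, stirling2_eq_U, stirling2_eq_U, U_rec]
  rw [Nat.factorial_succ]
  have hm : (m.factorial : ℝ) ≠ 0 := by exact_mod_cast m.factorial_ne_zero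
  have hm1 : ((m:ℝ)+1) ≠ 0 := by positivity
  push_cast
  field_simp
  ring

lemma stirling2_vanish : ∀ n m : ℕ, n < m → stirling2 n m = 0 := by
  intro n
  induction n with
  | zero => intro m hm; rw [stirling2_zero_left, if_neg (by omega)]
  | succ n ih =>
    intro m hm
    match m, hm with
    | m+1, hm =>
      rw [stirling2_rec, ih (m+1) (by omega), ih m (by omega)]
      ring

lemma stirling2_succ_zero (n : ℕ) : stirling2 (n+1) 0 = 0 := by
  simp [stirling2]

lemma fall_succ (x : ℝ) (m : ℕ) : fall x (m+1) = fall x m * (x - m) := prod_range_succ _ _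

lemma key (n : ℕ) (x : ℝ) :
    ∑ j ∈ range (n+1), stirling2 n j * fall x j = x^n := by
  induction n with
  | zero => simp [stirling2, fall]
  | succ n ih =>
    have hshift : ∑ m ∈ range (n+1), ((m:ℝ)+1) * stirling2 n (m+1) * fall x (m+1)
        = ∑ j ∈ range (n+1), (j:ℝ) * stirling2 n j * fall x j := by
      have h1 := sum_range_succ' (fun j : ℕ => (j:ℝ) * stirling2 n j * fall x j) (n+1)
      have h2 := sum_range_succ (fun j : ℕ => (j:ℝ) * stirling2 n j * fall x j) (n+1)
      simp only [Nat.cast_zero, zero_mul, add_zero, Nat.cast_add, Nat.cast_one] at h1 h2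
      rw [stirling2_vanish n (n+1) (by omega)] at h2
      simp only [mul_zero, zero_mul, add_zero] at h2
      linarith [h1, h2]
    calc ∑ j ∈ range (n+2), stirling2 (n+1) j * fall x j
        = ∑ m ∈ range (n+1), stirling2 (n+1) (m+1) * fall x (m+1) := by
          rw [sum_range_succ' (fun j : ℕ => stirling2 (n+1) j * fall x j) (n+1)]
          simp only [stirling2_succ_zero, zero_mul, add_zero]
      _ = ∑ m ∈ range (n+1), (((m:ℝ)+1) * stirling2 n (m+1) * fall x (m+1)
            + stirling2 n m * fall x m * (x - m)) := by
          apply sum_congr rfl; intro m _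
          rw [stirling2_rec, fall_succ]
          ring
      _ = (∑ m ∈ range (n+1), ((m:ℝ)+1) * stirling2 n (m+1) * fall x (m+1))
          + ∑ m ∈ range (n+1), stirling2 n m * fall x m * (x - m) := sum_add_distrib
      _ = (∑ j ∈ range (n+1), (j:ℝ) * stirling2 n j * fall x j)
          + ∑ m ∈ range (n+1), stirling2 n m * fall x m * (x - m) := by rw [hshift]
      _ = ∑ j ∈ range (n+1), stirling2 n j * fall x j * x := by
          rw [← sum_add_distrib]; apply sum_congr rfl; intro j _; ring
      _ = x ^ (n+1) := by rw [← sum_mul, ih]; ring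

theorem stirling2_gregory_sum (n : ℕ) :
    ∑ j ∈ Finset.range (n + 1), stirling2 n j * (j.factorial : ℝ) * gregory j
      = 1 / ((n : ℝ) + 1) := by
  have hterm : ∀ j ∈ range (n+1), stirling2 n j * (j.factorial : ℝ) * gregory j
      = ∫ x in (0:ℝ)..1, stirling2 n j * fall x j := by
    intro j _
    rw [mul_assoc, gregory_eq, ← intervalIntegral.integral_const_mul]
  rw [sum_congr rfl hterm]
  rw [← intervalIntegral.integral_finset_sum (f := fun j x => stirling2 n j * fall x j) (fun j _ =>
    Continuous.intervalIntegrable (continuous_const.mul (fall_continuous j) :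
      Continuous fun x => stirling2 n j * fall x j) 0 1)]
  rw [intervalIntegral.integral_congr (g := fun x => x^n) (fun x _ => key n x)]
  rw [integral_pow]
  norm_num
end

section
/- Let (τ_k)_{k≥0} be real polynomials with deg τ_k ≤ k. For n ≥ 1 and k ≥ 0 define π_k^{[n]} = Δ^n D τ_{k+n+1}. Then π_k^{[n]} has degree at most k, and its coefficients satisfy (1/n!) π_k^{[n]}[j] = Σ_{m=j}^{k+n} (m+1) τ_{k+n+1}[m+1] binomial(m, j) S(m-j, n) for j = 0, ..., k, where S denotes the Stirling numbers of the second kind. -/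
open Polynomial Finset

lemma coeff_comp_X_add_C (p : Polynomial ℝ) (c : ℝ) (N : ℕ) (hN : p.natDegree < N) (m : ℕ) :
    (p.comp (X + C c)).coeff m
      = ∑ l ∈ range N, p.coeff l * (l.choose m : ℝ) * c ^ (l - m) := by
  conv_lhs => rw [p.as_sum_range' N hN]
  rw [Polynomial.sum_comp, finset_sum_coeff]
  refine Finset.sum_congr rfl fun l _ => ?_
  rw [monomial_comp, coeff_C_mul, coeff_X_add_C_pow]
  ring

lemma eval_polyDelta_iter (p : Polynomial ℝ) (n : ℕ) (x : ℝ) :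
    (polyDelta^[n] p).eval x = (fwdDiff (1:ℝ))^[n] (fun y => p.eval y) x := by
  induction n generalizing p with
  | zero => simp
  | succ n IH =>
    rw [Function.iterate_succ_apply, Function.iterate_succ_apply, IH]
    have : (fun y => (polyDelta p).eval y) = fwdDiff (1:ℝ) (fun y => p.eval y) := by
      funext y
      simp [polyDelta, fwdDiff]
    rw [this]

lemma polyDelta_iter_eq_sum (p : Polynomial ℝ) (n : ℕ) :
    polyDelta^[n] p = ∑ i ∈ range (n + 1),
      C ((-1 : ℝ) ^ (n - i) * (n.choose i : ℝ)) * p.comp (X + C (i : ℝ)) := by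
  apply Polynomial.funext
  intro x
  rw [eval_polyDelta_iter, fwdDiff_iter_eq_sum_shift]
  rw [eval_finset_sum]
  refine Finset.sum_congr rfl fun i _ => ?_
  simp only [eval_mul, eval_C, eval_comp, eval_add, eval_X, zsmul_eq_mul, nsmul_eq_mul,
    Int.cast_mul, Int.cast_pow, Int.cast_neg, Int.cast_one, Int.cast_natCast, mul_one]

lemma coeff_polyDelta_iter (p : Polynomial ℝ) (n N : ℕ) (hN : p.natDegree < N) (j : ℕ) :
    (polyDelta^[n] p).coeff j = ∑ l ∈ range N,
      p.coeff l * (l.choose j : ℝ) * ((n.factorial : ℝ) * stirling2 (l - j) n) := by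
  rw [polyDelta_iter_eq_sum, finset_sum_coeff]
  simp_rw [coeff_C_mul, coeff_comp_X_add_C p _ N hN, Finset.mul_sum]
  rw [Finset.sum_comm]
  refine Finset.sum_congr rfl fun l _ => ?_
  have hfac : (n.factorial : ℝ) ≠ 0 := Nat.cast_ne_zero.mpr n.factorial_ne_zero
  have : (n.factorial : ℝ) * stirling2 (l - j) n
      = ∑ i ∈ range (n + 1), (n.choose i : ℝ) * (-1) ^ (n - i) * (i : ℝ) ^ (l - j) := by
    rw [stirling2]
    field_simp
  rw [this, Finset.mul_sum]
  refine Finset.sum_congr rfl fun i _ => ?_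
  ring

lemma coeff_polyDelta_eq_zero (p : Polynomial ℝ) (m : ℕ) (hm : p.natDegree ≤ m) :
    (polyDelta p).coeff m = 0 := by
  have hX : (X + 1 : Polynomial ℝ) = X + C 1 := by rw [C_1]
  rw [polyDelta, coeff_sub, hX, coeff_comp_X_add_C p 1 (m + 1) (Nat.lt_succ_of_le hm)]
  rw [Finset.sum_range_succ]
  have h0 : ∑ l ∈ range m, p.coeff l * (l.choose m : ℝ) * (1:ℝ) ^ (l - m) = 0 :=
    Finset.sum_eq_zero fun l hl => by
      rw [Nat.choose_eq_zero_of_lt (Finset.mem_range.mp hl)]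
      simp
  rw [h0, zero_add, Nat.choose_self]
  simp

lemma natDegree_polyDelta_iter_le (n : ℕ) (p : Polynomial ℝ) (d : ℕ)
    (h : p.natDegree ≤ d + n) : (polyDelta^[n] p).natDegree ≤ d := by
  induction n generalizing p with
  | zero => simpa using h
  | succ n IH =>
    rw [Function.iterate_succ_apply]
    refine IH _ (natDegree_le_iff_coeff_eq_zero.mpr fun m hm => ?_)
    exact coeff_polyDelta_eq_zero p m (by omega)

theorem pi_kn_degree_coeff (τ : ℕ → Polynomial ℝ) (hτ : ∀ k, (τ k).natDegree ≤ k)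
    (n k : ℕ) (hn : 1 ≤ n) :
    (polyDelta^[n] (Polynomial.derivative (τ (k + n + 1)))).natDegree ≤ k ∧
    ∀ j : ℕ, j ≤ k →
      (1 / (n.factorial : ℝ)) * (polyDelta^[n] (Polynomial.derivative (τ (k + n + 1)))).coeff j
        = ∑ m ∈ Finset.Icc j (k + n),
            ((m : ℝ) + 1) * (τ (k + n + 1)).coeff (m + 1) * (m.choose j : ℝ)
              * stirling2 (m - j) n := by
  set p := Polynomial.derivative (τ (k + n + 1)) with hp
  have hdeg : p.natDegree ≤ k + n := by
    have h1 := Polynomial.natDegree_derivative_le (τ (k + n + 1))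
    have h2 := hτ (k + n + 1)
    rw [← hp] at h1
    omega
  have hfac : (n.factorial : ℝ) ≠ 0 := Nat.cast_ne_zero.mpr n.factorial_ne_zero
  refine ⟨natDegree_polyDelta_iter_le n p k hdeg, fun j hj => ?_⟩
  rw [coeff_polyDelta_iter p n (k + n + 1) (by omega) j, Finset.mul_sum]
  rw [← Finset.sum_subset (s₁ := Finset.Icc j (k + n))
    (fun l hl => by simp only [Finset.mem_Icc] at hl; exact Finset.mem_range.mpr (by omega))
    (fun l hl hl' => ?_)]
  · refine Finset.sum_congr rfl fun l hl => ?_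
    rw [hp, coeff_derivative]
    field_simp
  · simp only [Finset.mem_range] at hl
    simp only [Finset.mem_Icc, not_and, not_le] at hl'
    have : l < j := by omega
    rw [Nat.choose_eq_zero_of_lt this]
    simp
end
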